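/- Let n ≥ 1, s ∈ (0,1), p ∈ [1,∞). Assume F : ℝ × (ℝⁿ∖{0}) → [0,∞) satisfies assumptions (2.1) and (2.5), and W : ℝ → [0,∞) is bounded. Let R > 0, φ ∈ X_R, and let u be a minimizer of E(·, B_R) with u = φ in CB_R. Then there exists C > 0 depending only on n, s, p, R such that E(u, B_R) ≤ C(‖φ‖^p_{W^{s,p}(B_{2R})} + ‖φ‖^p_{L^∞(CB_{2R})} + ‖W‖_{L^∞(ℝ)}). -/

import Mathlib

open MeasureTheory Metric Set Filter
open scoped ENNReal NNReal Topology RealInnerProductSpace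

noncomputable section

/-- `ℝⁿ` as a Euclidean space. -/
abbrev Euc (n : ℕ) : Type := EuclideanSpace ℝ (Fin n)

/-- The nonlocal (kinetic) part `K_Ω(u)` of the energy: the integral of
`F(u(x) - u(y), x - y)` over all pairs `(x, y)` with `x ∈ Ω` or `y ∈ Ω`. -/
def interaction (n : ℕ) (F : ℝ → Euc n → ℝ) (u : Euc n → ℝ) (Ω : Set (Euc n)) : ℝ≥0∞ :=
  ∫⁻ q in {q : Euc n × Euc n | q.1 ∈ Ω ∨ q.2 ∈ Ω},
    ENNReal.ofReal (F (u q.1 - u q.2) (q.1 - q.2))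

/-- The nonlocal energy `E(u, Ω) = K_Ω(u) + ∫_Ω W(u)`. -/
def energy (n : ℕ) (F : ℝ → Euc n → ℝ) (W : ℝ → ℝ) (u : Euc n → ℝ) (Ω : Set (Euc n)) :
    ℝ≥0∞ :=
  interaction n F u Ω + ∫⁻ x in Ω, ENNReal.ofReal (W (u x))

/-- `u` is a minimizer of `E(·, Ω)`: it has finite energy and its energy does not exceed the
energy of any competitor agreeing with `u` a.e. outside `Ω`. -/
def IsMinimizer (n : ℕ) (F : ℝ → Euc n → ℝ) (W : ℝ → ℝ) (u : Euc n → ℝ)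
    (Ω : Set (Euc n)) : Prop :=
  Measurable u ∧ energy n F W u Ω ≠ ⊤ ∧
    ∀ v : Euc n → ℝ, Measurable v → (∀ᵐ x ∂(volume.restrict Ωᶜ), v x = u x) →
      energy n F W u Ω ≤ energy n F W v Ω

/-- The `p`-th power of the Gagliardo seminorm `[u]_{W^{s,p}(Ω)}^p`. -/
def gagliardoP (n : ℕ) (s p : ℝ) (u : Euc n → ℝ) (Ω : Set (Euc n)) : ℝ≥0∞ :=
  ∫⁻ q in Ω ×ˢ Ω, ENNReal.ofReal (|u q.1 - u q.2| ^ p / ‖q.1 - q.2‖ ^ ((n : ℝ) + s * p))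

/-- Membership in the fractional Sobolev space `W^{s,p}(Ω)`. -/
def MemWsp (n : ℕ) (s p : ℝ) (u : Euc n → ℝ) (Ω : Set (Euc n)) : Prop :=
  MemLp u (ENNReal.ofReal p) (volume.restrict Ω) ∧ gagliardoP n s p u Ω ≠ ⊤

/-- The class `X_R` of admissible exterior data:
`φ ∈ L^∞(ℝⁿ)` with `φ ∈ W^{s,p}(B_{2R})`. -/
def MemX (n : ℕ) (s p R : ℝ) (φ : Euc n → ℝ) : Prop :=
  MemLp φ ⊤ (volume : Measure (Euc n)) ∧ MemWsp n s p φ (ball 0 (2 * R))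

/-- The quantity `[u]_{R,φ}^p`. -/
def bdryP (n : ℕ) (s p R : ℝ) (φ u : Euc n → ℝ) : ℝ≥0∞ :=
  ∫⁻ q in (ball (0 : Euc n) R) ×ˢ (ball (0 : Euc n) (2 * R) \ ball 0 R),
    ENNReal.ofReal (|u q.1 - φ q.2| ^ p / ‖q.1 - q.2‖ ^ ((n : ℝ) + s * p))

/-- The space `W^{s,p}_{R,φ}`: `u ∈ W^{s,p}(B_R)`, `[u]_{R,φ} < ∞` and `u = φ` on `CB_R`. -/
def MemWRphi (n : ℕ) (s p R : ℝ) (φ u : Euc n → ℝ) : Prop :=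
  MemWsp n s p u (ball 0 R) ∧ bdryP n s p R φ u ≠ ⊤ ∧ ∀ x ∉ ball (0 : Euc n) R, u x = φ x

/-- The `p`-th power of the `W^{s,p}(Ω)` norm, `‖u‖_{W^{s,p}(Ω)}^p = ‖u‖_{L^p(Ω)}^p + [u]_{W^{s,p}(Ω)}^p`. -/
def WspNormP (n : ℕ) (s p : ℝ) (u : Euc n → ℝ) (Ω : Set (Euc n)) : ℝ≥0∞ :=
  (∫⁻ x in Ω, ENNReal.ofReal (|u x| ^ p)) + gagliardoP n s p u Ω


/-!
Compare `u` with the competitor `v = ψ + c η`, where `ψ` is a Borel representative of `φ` and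
`η = (R - |x|)₊` vanishes off `B_R`. The upper bound in (2.5) and
`|a + b|^p ≤ 2^{p-1} (|a|^p + |b|^p)` reduce the kinetic energy of `v` to Gagliardo-type
integrals of `ψ` and `η` over pairs meeting `B_R`. For `ψ`, pairs inside `B_{2R}` give
`[φ]_{W^{s,p}(B_{2R})}`; for `x ∈ B_R`, `y ∉ B_{2R}` we have `|x - y| ≥ R`, so the kernel is
dominated by `R^{-p} min(|x - y|, R)^p / |x - y|^{n+sp}`, which is integrable since `0 < s < 1`,
and this yields the `L^p` and `L^∞` terms.

The shift `c` is there because `W(t) ≤ ‖W‖_∞` holds only off a null set of values `t`: by Fubini,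
for a.e. `c` the values `ψ(x) + c η(x)`, `x ∈ B_R`, avoid that set, and letting `c → 0` removes the
contribution of `η`.
-/
open Module in
theorem lintegral_min_rpow_div_rpow_lt_top {E : Type*} [NormedAddCommGroup E] [NormedSpace ℝ E]
    [FiniteDimensional ℝ E] [MeasurableSpace E] [BorelSpace E] (μ : Measure E)
    [μ.IsAddHaarMeasure] (hd : 1 ≤ finrank ℝ E) {p q R : ℝ} (hq : finrank ℝ E < q)
    (hqp : q - p < finrank ℝ E) (hR : 0 < R) :
    ∫⁻ z, ENNReal.ofReal (min ‖z‖ R ^ p / ‖z‖ ^ q) ∂μ < ∞ := by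
  have : Nontrivial E := nontrivial_of_finrank_pos (R := ℝ) hd
  have hd' : ((finrank ℝ E - 1 : ℕ) : ℝ) = finrank ℝ E - 1 := by push_cast [hd]; ring
  refine Integrable.lintegral_lt_top ((integrable_fun_norm_addHaar μ
    (f := fun y => min y R ^ p / y ^ q)).2 ?_)
  rw [← Ioc_union_Ioi_eq_Ioi hR.le]
  refine IntegrableOn.union ?_ ?_
  · have hint : IntegrableOn (fun y : ℝ => y ^ ((finrank ℝ E - 1 : ℝ) + p - q)) (Ioc 0 R) :=
      (intervalIntegrable_iff_integrableOn_Ioc_of_le hR.le).1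
        (intervalIntegral.intervalIntegrable_rpow' (by linarith))
    refine hint.congr_fun (fun y hy => ?_) measurableSet_Ioc
    dsimp only
    rw [smul_eq_mul, min_eq_left hy.2, ← Real.rpow_natCast, hd', Real.rpow_sub hy.1,
      Real.rpow_add hy.1, mul_div_assoc]
  · have hint : IntegrableOn (fun y : ℝ => R ^ p * y ^ ((finrank ℝ E - 1 : ℝ) - q)) (Ioi R) :=
      (integrableOn_Ioi_rpow_of_lt (by linarith) hR).const_mul _
    refine hint.congr_fun (fun y hy => ?_) measurableSet_Ioi
    have hy0 : 0 < y := hR.trans hy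
    dsimp only
    rw [smul_eq_mul, min_eq_right hy.le, ← Real.rpow_natCast, hd', Real.rpow_sub hy0]
    ring

theorem MeasureTheory.Measure.ae_prod_fst_ne_snd {α : Type*} [MeasurableSpace α] [MeasurableEq α]
    (μ : Measure α) [SFinite μ] [NullSingletonClass μ] : ∀ᵐ q ∂(μ.prod μ), q.1 ≠ q.2 :=
  (Measure.ae_prod_iff_ae_ae measurableSet_diagonal.compl).2 <|
    ae_of_all _ fun x => measure_mono_null (fun _ hy => (not_not.1 hy).symm) (measure_singleton x)

theorem lintegral_prod_univ_mul_sub {G : Type*} [AddGroup G] [MeasurableSpace G]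
    [MeasurableAdd₂ G] [MeasurableNeg G] (μ : Measure G) [SFinite μ] [μ.IsAddLeftInvariant]
    [μ.IsNegInvariant] {f g : G → ℝ≥0∞} (hf : Measurable f) (hg : Measurable g) (A : Set G) :
    ∫⁻ q in A ×ˢ univ, f q.1 * g (q.1 - q.2) ∂(μ.prod μ) =
      (∫⁻ x in A, f x ∂μ) * ∫⁻ z, g z ∂μ := by
  rw [← Measure.prod_restrict, Measure.restrict_univ,
    lintegral_prod _ (by fun_prop), ← lintegral_mul_const _ hf]
  refine lintegral_congr fun x => ?_
  dsimp only
  rw [lintegral_const_mul _ (by fun_prop), lintegral_sub_left_eq_self g x]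

theorem setLIntegral_fst_mem_or_snd_mem_le_two_mul {α : Type*} [MeasurableSpace α] (μ : Measure α)
    [SFinite μ] {f : α × α → ℝ≥0∞} (hf : ∀ q, f q.swap = f q) (A : Set α) :
    ∫⁻ q in {q | q.1 ∈ A ∨ q.2 ∈ A}, f q ∂(μ.prod μ) ≤ 2 * ∫⁻ q in A ×ˢ univ, f q ∂(μ.prod μ) := by
  have hswap : ∫⁻ q in univ ×ˢ A, f q ∂(μ.prod μ) = ∫⁻ q in A ×ˢ univ, f q ∂(μ.prod μ) := by
    rw [← Measure.prod_restrict, ← lintegral_prod_swap, ← Measure.prod_restrict]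
    simp only [hf]
  calc ∫⁻ q in {q | q.1 ∈ A ∨ q.2 ∈ A}, f q ∂(μ.prod μ)
      ≤ ∫⁻ q in A ×ˢ univ ∪ univ ×ˢ A, f q ∂(μ.prod μ) :=
        lintegral_mono_set fun q hq => hq.imp (⟨·, trivial⟩) (⟨trivial, ·⟩)
    _ ≤ 2 * ∫⁻ q in A ×ˢ univ, f q ∂(μ.prod μ) := by
        rw [two_mul]
        nth_rewrite 2 [← hswap]
        exact lintegral_union_le _ _ _

theorem ae_ae_add_mul_of_ae {α : Type*} [MeasurableSpace α] {μ : Measure α} [SFinite μ]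
    {P : ℝ → Prop} (hP : ∀ᵐ t, P t) {ψ η : α → ℝ} (hψ : Measurable ψ) (hη : Measurable η)
    (hη0 : ∀ᵐ x ∂μ, η x ≠ 0) :
    ∀ᵐ c, ∀ᵐ x ∂μ, P (ψ x + c * η x) := by
  obtain ⟨T, hPT, hTm, hT0⟩ := exists_measurable_superset_of_null (ae_iff.1 hP)
  have hT : ∀ t ∉ T, P t := fun t ht => not_not.1 fun h => ht (hPT h)
  suffices h : ∀ᵐ c, ∀ᵐ x ∂μ, ψ x + c * η x ∉ T by
    filter_upwards [h] with c hc
    filter_upwards [hc] with x hx using hT _ hx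
  refine (Measure.ae_ae_comm (hTm.preimage (by fun_prop)).compl).1 ?_
  filter_upwards [hη0] with x hx
  have : volume ((· * η x) ⁻¹' ((ψ x + ·) ⁻¹' T)) = 0 := by
    rw [Real.volume_preimage_mul_right hx, measure_preimage_add, hT0, mul_zero]
  exact measure_mono_null (fun c hc => not_not.1 hc) this

theorem Real.frequently_nhdsGT_of_ae {P : ℝ → Prop} (h : ∀ᵐ t, P t) (a : ℝ) :
    ∃ᶠ t in 𝓝[>] a, P t := by
  refine frequently_iff.2 fun hU => ?_
  obtain ⟨b, hab, hsub⟩ := mem_nhdsGT_iff_exists_Ioo_subset.1 hU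
  obtain ⟨t, ht, hPt⟩ := Measure.exists_mem_of_measure_ne_zero_of_ae (s := Ioo a b)
    (by simpa using hab) (ae_restrict_of_ae h)
  exact ⟨t, hsub ht, hPt⟩

theorem abs_add_rpow_le {p : ℝ} (hp : 1 ≤ p) (a b : ℝ) :
    |a + b| ^ p ≤ 2 ^ (p - 1) * (|a| ^ p + |b| ^ p) :=
  (Real.rpow_le_rpow (abs_nonneg _) (abs_add_le a b) (by linarith)).trans <| by
    exact_mod_cast NNReal.rpow_add_le_mul_rpow_add_rpow ⟨|a|, abs_nonneg a⟩ ⟨|b|, abs_nonneg b⟩ hp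

theorem abs_max_sub_norm_sub_le {E : Type*} [SeminormedAddCommGroup E] {R : ℝ} (hR : 0 ≤ R)
    (x y : E) : |max (R - ‖x‖) 0 - max (R - ‖y‖) 0| ≤ min ‖x - y‖ R := by
  refine le_min ((abs_max_sub_max_le_abs _ _ _).trans ?_) ?_
  · rw [sub_sub_sub_cancel_left, abs_sub_comm]
    exact abs_norm_sub_norm_le x y
  · rw [abs_sub_le_iff]
    constructor <;> linarith [le_max_right (R - ‖x‖) 0, le_max_right (R - ‖y‖) 0,
      max_le (by linarith [norm_nonneg x] : R - ‖x‖ ≤ R) hR,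
      max_le (by linarith [norm_nonneg y] : R - ‖y‖ ≤ R) hR]

theorem abs_sub_rpow_div_le_of_le {p q R d : ℝ} (hp : 1 ≤ p) (hR : 0 < R) (hRd : R ≤ d)
    (a b : ℝ) :
    |a - b| ^ p / d ^ q ≤ 2 ^ (p - 1) / R ^ p * (|a| ^ p + |b| ^ p) * (min d R ^ p / d ^ q) := by
  have hRp : 0 < R ^ p := Real.rpow_pos_of_pos hR p
  have hdq : 0 < d ^ q := Real.rpow_pos_of_pos (hR.trans_le hRd) q
  rw [min_eq_right hRd, sub_eq_add_neg, ← abs_neg b]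
  calc |a + -b| ^ p / d ^ q ≤ 2 ^ (p - 1) * (|a| ^ p + |-b| ^ p) / d ^ q := by
        gcongr; exact abs_add_rpow_le hp a (-b)
    _ = _ := by field_simp

def gagliardoOn (n : ℕ) (s p : ℝ) (v : Euc n → ℝ) (D : Set (Euc n × Euc n)) : ℝ≥0∞ :=
  ∫⁻ q in D, ENNReal.ofReal (|v q.1 - v q.2| ^ p / ‖q.1 - q.2‖ ^ ((n : ℝ) + s * p))

section Gagliardo

variable {n : ℕ} {s p : ℝ}

theorem gagliardoP_eq_gagliardoOn (u : Euc n → ℝ) (Ω : Set (Euc n)) :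
    gagliardoP n s p u Ω = gagliardoOn n s p u (Ω ×ˢ Ω) := rfl

theorem gagliardoOn_mono_set {v : Euc n → ℝ} {D D' : Set (Euc n × Euc n)} (h : D ⊆ D') :
    gagliardoOn n s p v D ≤ gagliardoOn n s p v D' :=
  lintegral_mono_set h

theorem gagliardoOn_congr_ae {f g : Euc n → ℝ} (h : f =ᵐ[volume] g) (D : Set (Euc n × Euc n)) :
    gagliardoOn n s p f D = gagliardoOn n s p g D := by
  refine lintegral_congr_ae (ae_restrict_of_ae ?_)
  rw [Measure.volume_eq_prod]
  filter_upwards [Measure.quasiMeasurePreserving_fst.ae_eq_comp h,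
    Measure.quasiMeasurePreserving_snd.ae_eq_comp h] with q h1 h2
  simp only [Function.comp_apply] at h1 h2
  rw [h1, h2]

theorem wspNormP_congr_ae {f g : Euc n → ℝ} (h : f =ᵐ[volume] g) (Ω : Set (Euc n)) :
    WspNormP n s p f Ω = WspNormP n s p g Ω := by
  rw [WspNormP, WspNormP, gagliardoP_eq_gagliardoOn, gagliardoP_eq_gagliardoOn,
    gagliardoOn_congr_ae h]
  congr 1
  refine lintegral_congr_ae (ae_restrict_of_ae ?_)
  filter_upwards [h] with x hx
  rw [hx]

theorem gagliardoOn_add_le (hp : 1 ≤ p) {f : Euc n → ℝ} (hf : Measurable f) (g : Euc n → ℝ)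
    (D : Set (Euc n × Euc n)) :
    gagliardoOn n s p (f + g) D ≤
      ENNReal.ofReal (2 ^ (p - 1)) * (gagliardoOn n s p f D + gagliardoOn n s p g D) := by
  rw [gagliardoOn, gagliardoOn, gagliardoOn, ← lintegral_add_left (by fun_prop),
    ← lintegral_const_mul' _ _ ENNReal.ofReal_ne_top]
  refine lintegral_mono fun q => ?_
  rw [← ENNReal.ofReal_add (by positivity) (by positivity), ← ENNReal.ofReal_mul (by positivity),
    mul_add, ← mul_div_assoc, ← mul_div_assoc, ← add_div, ← mul_add]
  refine ENNReal.ofReal_le_ofReal (div_le_div_of_nonneg_right ?_ (by positivity))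
  simpa only [Pi.add_apply, add_sub_add_comm] using abs_add_rpow_le hp _ _

theorem gagliardoOn_const_mul (c : ℝ) (f : Euc n → ℝ) (D : Set (Euc n × Euc n)) :
    gagliardoOn n s p (fun x => c * f x) D = ENNReal.ofReal (|c| ^ p) * gagliardoOn n s p f D := by
  rw [gagliardoOn, gagliardoOn, ← lintegral_const_mul' _ _ ENNReal.ofReal_ne_top]
  refine lintegral_congr fun q => ?_
  rw [← ENNReal.ofReal_mul (by positivity), ← mul_sub, abs_mul,
    Real.mul_rpow (abs_nonneg _) (abs_nonneg _), mul_div_assoc]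

theorem gagliardoOn_fst_mem_or_snd_mem_le_two_mul (v : Euc n → ℝ) (Ω : Set (Euc n)) :
    gagliardoOn n s p v {q | q.1 ∈ Ω ∨ q.2 ∈ Ω} ≤ 2 * gagliardoOn n s p v (Ω ×ˢ univ) := by
  rw [gagliardoOn, gagliardoOn, Measure.volume_eq_prod]
  refine setLIntegral_fst_mem_or_snd_mem_le_two_mul _ (fun q => ?_) Ω
  simp only [Prod.fst_swap, Prod.snd_swap, abs_sub_comm (v q.2), norm_sub_rev q.2]

end Gagliardo

def truncatedKernelIntegral (n : ℕ) (s p R : ℝ) : ℝ≥0∞ :=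
  ∫⁻ z : Euc n, ENNReal.ofReal (min ‖z‖ R ^ p / ‖z‖ ^ ((n : ℝ) + s * p))

section Estimates

variable {n : ℕ} {s p R : ℝ}

theorem truncatedKernelIntegral_lt_top (hn : 1 ≤ n) (hs : s ∈ Ioo (0 : ℝ) 1) (hp : 0 < p)
    (hR : 0 < R) : truncatedKernelIntegral n s p R < ∞ := by
  have hsp : 0 < s * p := mul_pos hs.1 hp
  have hsp' : s * p < p := by nlinarith [hs.2]
  refine lintegral_min_rpow_div_rpow_lt_top volume ?_ ?_ ?_ hR <;>
    simp only [finrank_euclideanSpace_fin] <;> first | exact hn | linarith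

theorem interaction_le_mul_gagliardoOn (hn : 1 ≤ n) {F : ℝ → Euc n → ℝ} {c : ℝ}
    (hF : ∀ (t : ℝ) (x : Euc n), x ≠ 0 → F t x ≤ c * (|t| ^ p / ‖x‖ ^ ((n : ℝ) + s * p)))
    (v : Euc n → ℝ) (Ω : Set (Euc n)) :
    interaction n F v Ω ≤ ENNReal.ofReal c * gagliardoOn n s p v {q | q.1 ∈ Ω ∨ q.2 ∈ Ω} := by
  have : Nonempty (Fin n) := ⟨⟨0, hn⟩⟩
  rw [interaction, gagliardoOn, ← lintegral_const_mul' _ _ ENNReal.ofReal_ne_top]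
  refine lintegral_mono_ae (ae_restrict_of_ae ?_)
  rw [Measure.volume_eq_prod]
  filter_upwards [Measure.ae_prod_fst_ne_snd volume] with q hq
  rw [← ENNReal.ofReal_mul' (by positivity)]
  exact ENNReal.ofReal_le_ofReal (hF _ _ (sub_ne_zero.2 hq))

theorem gagliardoOn_cutoff_le (hp : 0 ≤ p) (hR : 0 < R) :
    gagliardoOn n s p (fun x => max (R - ‖x‖) 0) (ball 0 R ×ˢ univ) ≤
      volume (ball (0 : Euc n) R) * truncatedKernelIntegral n s p R := by
  calc gagliardoOn n s p (fun x => max (R - ‖x‖) 0) (ball 0 R ×ˢ univ)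
      ≤ ∫⁻ q in ball (0 : Euc n) R ×ˢ univ, 1 * ENNReal.ofReal
          (min ‖q.1 - q.2‖ R ^ p / ‖q.1 - q.2‖ ^ ((n : ℝ) + s * p)) ∂(volume.prod volume) := by
        rw [gagliardoOn, Measure.volume_eq_prod]
        refine lintegral_mono fun q => ?_
        rw [one_mul]
        gcongr
        exact abs_max_sub_norm_sub_le hR.le _ _
    _ = volume (ball (0 : Euc n) R) * truncatedKernelIntegral n s p R := by
        rw [← setLIntegral_one]
        exact lintegral_prod_univ_mul_sub volume (f := fun _ => 1)
          (g := fun z => ENNReal.ofReal (min ‖z‖ R ^ p / ‖z‖ ^ ((n : ℝ) + s * p)))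
          measurable_const (by fun_prop) _

theorem gagliardoOn_ball_prod_univ_le (hp : 1 ≤ p) (hR : 0 < R) {ψ : Euc n → ℝ}
    (hψ : Measurable ψ) :
    gagliardoOn n s p ψ (ball 0 R ×ˢ univ) ≤ gagliardoP n s p ψ (ball 0 (2 * R)) +
      ENNReal.ofReal (2 ^ (p - 1) / R ^ p) *
        ((∫⁻ x in ball (0 : Euc n) R, ENNReal.ofReal (|ψ x| ^ p)) +
          eLpNorm ψ ⊤ (volume.restrict (ball (0 : Euc n) (2 * R))ᶜ) ^ p *
            volume (ball (0 : Euc n) R)) * truncatedKernelIntegral n s p R := by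
  set M := eLpNorm ψ ⊤ (volume.restrict (ball (0 : Euc n) (2 * R))ᶜ)
  set k : Euc n → ℝ≥0∞ := fun z => ENNReal.ofReal (min ‖z‖ R ^ p / ‖z‖ ^ ((n : ℝ) + s * p))
  have hM : ∀ᵐ q ∂(volume.restrict (ball (0 : Euc n) R ×ˢ (ball 0 (2 * R))ᶜ)),
      ENNReal.ofReal |ψ q.2| ≤ M := by
    rw [Measure.volume_eq_prod, ← Measure.prod_restrict]
    refine Measure.quasiMeasurePreserving_snd.ae (p := fun y => ENNReal.ofReal |ψ y| ≤ M) ?_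
    filter_upwards [ae_le_eLpNormEssSup (f := ψ)] with y hy
    rw [← Real.enorm_eq_ofReal_abs]
    exact hy.trans_eq eLpNorm_exponent_top.symm
  have hfar : gagliardoOn n s p ψ (ball 0 R ×ˢ (ball 0 (2 * R))ᶜ) ≤
      ENNReal.ofReal (2 ^ (p - 1) / R ^ p) *
        ((∫⁻ x in ball (0 : Euc n) R, ENNReal.ofReal (|ψ x| ^ p)) +
          M ^ p * volume (ball (0 : Euc n) R)) * truncatedKernelIntegral n s p R := by
    calc gagliardoOn n s p ψ (ball 0 R ×ˢ (ball 0 (2 * R))ᶜ)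
        ≤ ∫⁻ q in ball (0 : Euc n) R ×ˢ (ball 0 (2 * R))ᶜ, ENNReal.ofReal (2 ^ (p - 1) / R ^ p) *
            ((ENNReal.ofReal (|ψ q.1| ^ p) + M ^ p) * k (q.1 - q.2)) := by
          refine lintegral_mono_ae ?_
          filter_upwards [hM, ae_restrict_mem (measurableSet_ball.prod measurableSet_ball.compl)]
            with q hq ⟨hx, hy⟩
          rw [mem_ball_zero_iff] at hx
          rw [mem_compl_iff, mem_ball_zero_iff, not_lt] at hy
          have hRd : R ≤ ‖q.1 - q.2‖ := by
            linarith [norm_sub_norm_le q.2 q.1, norm_sub_rev q.2 q.1]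
          refine (ENNReal.ofReal_le_ofReal
            (abs_sub_rpow_div_le_of_le hp hR hRd (ψ q.1) (ψ q.2))).trans ?_
          rw [ENNReal.ofReal_mul (by positivity), ENNReal.ofReal_mul (by positivity),
            ENNReal.ofReal_add (by positivity) (by positivity),
            ← ENNReal.ofReal_rpow_of_nonneg (abs_nonneg (ψ q.2)) (by linarith), mul_assoc]
          gcongr
      _ ≤ ∫⁻ q in ball (0 : Euc n) R ×ˢ univ, ENNReal.ofReal (2 ^ (p - 1) / R ^ p) *
            ((ENNReal.ofReal (|ψ q.1| ^ p) + M ^ p) * k (q.1 - q.2)) :=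
          lintegral_mono_set (prod_mono le_rfl (subset_univ _))
      _ = _ := by
          rw [lintegral_const_mul' _ _ ENNReal.ofReal_ne_top, Measure.volume_eq_prod,
            lintegral_prod_univ_mul_sub volume (f := fun x => ENNReal.ofReal (|ψ x| ^ p) + M ^ p)
              (g := k) (by fun_prop) (by fun_prop),
            lintegral_add_right _ measurable_const, setLIntegral_const, mul_assoc]
          rfl
  have hsplit : ball (0 : Euc n) R ×ˢ (univ : Set (Euc n)) ⊆
      ball 0 (2 * R) ×ˢ ball 0 (2 * R) ∪ ball 0 R ×ˢ (ball 0 (2 * R))ᶜ := by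
    rintro ⟨x, y⟩ ⟨hx, -⟩
    by_cases hy : y ∈ ball (0 : Euc n) (2 * R)
    · exact Or.inl ⟨ball_subset_ball (by linarith) hx, hy⟩
    · exact Or.inr ⟨hx, hy⟩
  calc gagliardoOn n s p ψ (ball 0 R ×ˢ univ)
      ≤ gagliardoOn n s p ψ (ball 0 (2 * R) ×ˢ ball 0 (2 * R)) +
          gagliardoOn n s p ψ (ball 0 R ×ˢ (ball 0 (2 * R))ᶜ) :=
        (gagliardoOn_mono_set hsplit).trans (lintegral_union_le _ _ _)
    _ ≤ _ := add_le_add le_rfl hfar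

theorem energy_le_of_isMinimizer_of_ae_le (hn : 1 ≤ n) (hp : 1 ≤ p) (hR : 0 < R)
    {F : ℝ → Euc n → ℝ} {W : ℝ → ℝ} {c : ℝ}
    (hF : ∀ (t : ℝ) (x : Euc n), x ≠ 0 → F t x ≤ c * (|t| ^ p / ‖x‖ ^ ((n : ℝ) + s * p)))
    {u ψ : Euc n → ℝ} (hu : IsMinimizer n F W u (ball 0 R)) (hψ : Measurable ψ)
    (hψu : ∀ᵐ x ∂(volume.restrict (ball (0 : Euc n) R)ᶜ), ψ x = u x) {a : ℝ} {M : ℝ≥0∞}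
    (hW : ∀ᵐ x ∂(volume.restrict (ball (0 : Euc n) R)),
      ENNReal.ofReal (W (ψ x + a * max (R - ‖x‖) 0)) ≤ M) :
    energy n F W u (ball 0 R) ≤ 2 * ENNReal.ofReal (2 ^ (p - 1)) * ENNReal.ofReal c *
      (gagliardoOn n s p ψ (ball 0 R ×ˢ univ) + ENNReal.ofReal (|a| ^ p) *
        (volume (ball (0 : Euc n) R) * truncatedKernelIntegral n s p R)) +
      M * volume (ball (0 : Euc n) R) := by
  set η : Euc n → ℝ := fun x => max (R - ‖x‖) 0
  set v : Euc n → ℝ := ψ + fun x => a * η x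
  have hv : ∀ᵐ x ∂(volume.restrict (ball (0 : Euc n) R)ᶜ), v x = u x := by
    filter_upwards [hψu, ae_restrict_mem measurableSet_ball.compl] with x hx hxR
    rw [mem_compl_iff, mem_ball_zero_iff, not_lt] at hxR
    simp [v, η, hx, hxR]
  have hkin : interaction n F v (ball 0 R) ≤ 2 * ENNReal.ofReal (2 ^ (p - 1)) *
      ENNReal.ofReal c * (gagliardoOn n s p ψ (ball 0 R ×ˢ univ) + ENNReal.ofReal (|a| ^ p) *
        (volume (ball (0 : Euc n) R) * truncatedKernelIntegral n s p R)) :=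
    calc interaction n F v (ball 0 R)
        ≤ ENNReal.ofReal c * (2 * gagliardoOn n s p v (ball 0 R ×ˢ univ)) :=
          (interaction_le_mul_gagliardoOn hn hF v _).trans
            (mul_le_mul_right (gagliardoOn_fst_mem_or_snd_mem_le_two_mul v _) _)
      _ ≤ ENNReal.ofReal c * (2 * (ENNReal.ofReal (2 ^ (p - 1)) *
            (gagliardoOn n s p ψ (ball 0 R ×ˢ univ) + ENNReal.ofReal (|a| ^ p) *
              gagliardoOn n s p η (ball 0 R ×ˢ univ)))) := by
          rw [← gagliardoOn_const_mul]
          gcongr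
          exact gagliardoOn_add_le hp hψ _ _
      _ = 2 * ENNReal.ofReal (2 ^ (p - 1)) * ENNReal.ofReal c *
            (gagliardoOn n s p ψ (ball 0 R ×ˢ univ) + ENNReal.ofReal (|a| ^ p) *
              gagliardoOn n s p η (ball 0 R ×ˢ univ)) := by ring
      _ ≤ _ := by grw [gagliardoOn_cutoff_le (by linarith) hR]
  have hpot : ∫⁻ x in ball (0 : Euc n) R, ENNReal.ofReal (W (v x)) ≤
      M * volume (ball (0 : Euc n) R) :=
    (lintegral_mono_ae hW).trans_eq (setLIntegral_const _ _)
  exact (hu.2.2 v (by fun_prop) hv).trans (add_le_add hkin hpot)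

theorem energy_le_of_isMinimizer (hn : 1 ≤ n) (hs : s ∈ Ioo (0 : ℝ) 1) (hp : 1 ≤ p)
    (hR : 0 < R) {F : ℝ → Euc n → ℝ} {W : ℝ → ℝ} {c : ℝ} (hW : ∀ t, 0 ≤ W t)
    (hF : ∀ (t : ℝ) (x : Euc n), x ≠ 0 → F t x ≤ c * (|t| ^ p / ‖x‖ ^ ((n : ℝ) + s * p)))
    {u ψ : Euc n → ℝ} (hu : IsMinimizer n F W u (ball 0 R)) (hψ : Measurable ψ)
    (hψu : ∀ᵐ x ∂(volume.restrict (ball (0 : Euc n) R)ᶜ), ψ x = u x) :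
    energy n F W u (ball 0 R) ≤ 2 * ENNReal.ofReal (2 ^ (p - 1)) * ENNReal.ofReal c *
      gagliardoOn n s p ψ (ball 0 R ×ˢ univ) +
      eLpNorm W ⊤ volume * volume (ball (0 : Euc n) R) := by
  set K := 2 * ENNReal.ofReal (2 ^ (p - 1)) * ENNReal.ofReal c
  set X := K * gagliardoOn n s p ψ (ball 0 R ×ˢ univ) +
    eLpNorm W ⊤ volume * volume (ball (0 : Euc n) R)
  set Y := K * (volume (ball (0 : Euc n) R) * truncatedKernelIntegral n s p R)
  have hY : Y ≠ ∞ := ENNReal.mul_ne_top (by finiteness) (ENNReal.mul_ne_top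
    measure_ball_lt_top.ne (truncatedKernelIntegral_lt_top hn hs (by linarith) hR).ne)
  have hWae : ∀ᵐ t, ENNReal.ofReal (W t) ≤ eLpNorm W ⊤ volume := by
    filter_upwards [ae_le_eLpNormEssSup (f := W) (μ := volume)] with t ht
    rw [← Real.enorm_eq_ofReal (hW t)]
    exact ht.trans_eq eLpNorm_exponent_top.symm
  have hη : ∀ᵐ x ∂(volume.restrict (ball (0 : Euc n) R)), max (R - ‖x‖) 0 ≠ 0 := by
    filter_upwards [ae_restrict_mem measurableSet_ball] with x hx
    exact (lt_max_of_lt_left (sub_pos.2 (mem_ball_zero_iff.1 hx))).ne'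
  have hgood : ∃ᶠ a in 𝓝[>] 0, energy n F W u (ball 0 R) ≤ X + ENNReal.ofReal (|a| ^ p) * Y :=
    (Real.frequently_nhdsGT_of_ae (ae_ae_add_mul_of_ae hWae hψ (by fun_prop) hη) 0).mono
      fun a ha => (energy_le_of_isMinimizer_of_ae_le hn hp hR hF hu hψ hψu ha).trans_eq (by ring)
  have hlim : Tendsto (fun a : ℝ => X + ENNReal.ofReal (|a| ^ p) * Y) (𝓝[>] 0) (𝓝 X) := by
    have h0 : Tendsto (fun a : ℝ => ENNReal.ofReal (|a| ^ p)) (𝓝 0) (𝓝 0) := by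
      have := (ENNReal.continuous_ofReal.comp (continuous_abs.rpow_const fun _ =>
        Or.inr (by linarith : (0 : ℝ) ≤ p))).tendsto 0
      simpa [Function.comp_def, Real.zero_rpow (by linarith : p ≠ 0)] using this
    simpa using tendsto_const_nhds.add
      (ENNReal.Tendsto.mul_const (h0.mono_left nhdsWithin_le_nhds) (Or.inr hY))
  exact ge_of_tendsto_of_frequently hlim hgood

theorem exists_energy_le_of_isMinimizer (hn : 1 ≤ n) (hs : s ∈ Ioo (0 : ℝ) 1) (hp : 1 ≤ p)
    (hR : 0 < R) {F : ℝ → Euc n → ℝ} {c : ℝ}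
    (hF : ∀ (t : ℝ) (x : Euc n), x ≠ 0 → F t x ≤ c * (|t| ^ p / ‖x‖ ^ ((n : ℝ) + s * p))) :
    ∃ C : ℝ≥0∞, C ≠ ∞ ∧ ∀ {W : ℝ → ℝ} {u ψ : Euc n → ℝ}, (∀ t, 0 ≤ W t) →
      IsMinimizer n F W u (ball 0 R) → Measurable ψ →
      (∀ᵐ x ∂(volume.restrict (ball (0 : Euc n) R)ᶜ), ψ x = u x) →
      energy n F W u (ball 0 R) ≤ C *
        (WspNormP n s p ψ (ball 0 (2 * R)) +
          eLpNorm ψ ⊤ (volume.restrict (ball (0 : Euc n) (2 * R))ᶜ) ^ p +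
          eLpNorm W ⊤ (volume : Measure ℝ)) := by
  set K := 2 * ENNReal.ofReal (2 ^ (p - 1)) * ENNReal.ofReal c
  set A := ENNReal.ofReal (2 ^ (p - 1) / R ^ p)
  set V := volume (ball (0 : Euc n) R)
  set J := truncatedKernelIntegral n s p R
  have hJ : J ≠ ∞ := (truncatedKernelIntegral_lt_top hn hs (by linarith) hR).ne
  refine ⟨K * (1 + A * (1 + V) * J) + V, by finiteness, fun {W u ψ} hW hu hψ hψu => ?_⟩
  set N := WspNormP n s p ψ (ball 0 (2 * R))
  set Mp := eLpNorm ψ ⊤ (volume.restrict (ball (0 : Euc n) (2 * R))ᶜ) ^ p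
  set MW := eLpNorm W ⊤ (volume : Measure ℝ)
  have hL : ∫⁻ x in ball (0 : Euc n) R, ENNReal.ofReal (|ψ x| ^ p) ≤ N :=
    (lintegral_mono_set (ball_subset_ball (by linarith))).trans le_self_add
  have hG : gagliardoP n s p ψ (ball 0 (2 * R)) ≤ N := le_add_self
  have hN : N ≤ N + Mp + MW := by rw [add_assoc]; exact le_self_add
  have hMp : Mp ≤ N + Mp + MW := le_add_self.trans le_self_add
  have hMW : MW ≤ N + Mp + MW := le_add_self
  calc energy n F W u (ball 0 R)
      ≤ K * gagliardoOn n s p ψ (ball 0 R ×ˢ univ) + MW * V :=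
        energy_le_of_isMinimizer hn hs hp hR hW hF hu hψ hψu
    _ ≤ K * (N + A * (N + Mp * V) * J) + MW * V := by
        grw [gagliardoOn_ball_prod_univ_le hp hR hψ, hG, hL]
    _ ≤ K * ((N + Mp + MW) + A * ((N + Mp + MW) + (N + Mp + MW) * V) * J) +
          (N + Mp + MW) * V := by
        gcongr
    _ = (K * (1 + A * (1 + V) * J) + V) * (N + Mp + MW) := by ring

end Estimates

theorem minimizer_energy_bound_general
    (n : ℕ) (hn : 1 ≤ n) (s p : ℝ) (hs : s ∈ Ioo (0 : ℝ) 1) (hp : 1 ≤ p)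
    (F : ℝ → Euc n → ℝ) (W : ℝ → ℝ)
    (hW_nonneg : ∀ t : ℝ, 0 ≤ W t)
    -- (2.5) integrability
    (h25 : ∃ cs cS : ℝ, 0 < cs ∧ 0 < cS ∧ ∀ (t : ℝ) (x : Euc n), x ≠ 0 →
      cs * (|t| ^ p / ‖x‖ ^ ((n : ℝ) + s * p) - 1 / ‖x‖ ^ ((n : ℝ) + s * p - p)) ≤ F t x ∧
      F t x ≤ cS * (|t| ^ p / ‖x‖ ^ ((n : ℝ) + s * p)))
    (R : ℝ) (hR : 0 < R) :
    ∃ C : ℝ, 0 < C ∧ ∀ (φ u : Euc n → ℝ), MemX n s p R φ →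
      IsMinimizer n F W u (ball 0 R) → (∀ x ∉ ball (0 : Euc n) R, u x = φ x) →
      energy n F W u (ball 0 R) ≤ ENNReal.ofReal C *
        (WspNormP n s p φ (ball 0 (2 * R)) +
          (eLpNorm φ ⊤ (volume.restrict (ball (0 : Euc n) (2 * R))ᶜ)) ^ p +
          eLpNorm W ⊤ (volume : Measure ℝ)) := by
  obtain ⟨_, cS, -, -, hF⟩ := h25
  obtain ⟨C, hC, hE⟩ :=
    exists_energy_le_of_isMinimizer hn hs hp hR fun t x hx => (hF t x hx).2
  refine ⟨C.toReal + 1, by positivity, fun φ u hφ hu hφu => ?_⟩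
  have hφm := hφ.1.aestronglyMeasurable.aemeasurable
  have hψu : ∀ᵐ x ∂(volume.restrict (ball (0 : Euc n) R)ᶜ), hφm.mk φ x = u x := by
    filter_upwards [ae_restrict_of_ae hφm.ae_eq_mk, ae_restrict_mem measurableSet_ball.compl]
      with x hx hxR
    exact ((hφu x hxR).trans hx).symm
  rw [wspNormP_congr_ae hφm.ae_eq_mk, eLpNorm_congr_ae (ae_restrict_of_ae hφm.ae_eq_mk)]
  refine (hE hW_nonneg hu hφm.measurable_mk hψu).trans (mul_le_mul_left ?_ _)
  exact (ENNReal.le_ofReal_iff_toReal_le hC (by positivity)).2 (by linarith)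

/-- **Proposition 3 (1)**: a minimizer `u` of `E(·, B_R)` with exterior datum `φ ∈ X_R` has
energy bounded by `C (‖φ‖_{W^{s,p}(B_{2R})}^p + ‖φ‖_{L^∞(CB_{2R})}^p + ‖W‖_{L^∞(ℝ)})`,
with `C = C(n, s, p, R) > 0`. -/
theorem minimizer_energy_bound
    (n : ℕ) (hn : 1 ≤ n) (s p : ℝ) (hs : s ∈ Ioo (0 : ℝ) 1) (hp : 1 ≤ p)
    (F : ℝ → Euc n → ℝ) (W : ℝ → ℝ)
    (hF_nonneg : ∀ (t : ℝ) (x : Euc n), 0 ≤ F t x)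
    (hW_nonneg : ∀ t : ℝ, 0 ≤ W t)
    (hW_bdd : BddAbove (Set.range W))
    -- (2.1) symmetry
    (h21 : ∀ (t : ℝ) (x : Euc n), x ≠ 0 → F t x = F (-t) x ∧ F (-t) x = F (-t) (-x))
    -- (2.5) integrability
    (h25 : ∃ cs cS : ℝ, 0 < cs ∧ 0 < cS ∧ ∀ (t : ℝ) (x : Euc n), x ≠ 0 →
      cs * (|t| ^ p / ‖x‖ ^ ((n : ℝ) + s * p) - 1 / ‖x‖ ^ ((n : ℝ) + s * p - p)) ≤ F t x ∧
      F t x ≤ cS * (|t| ^ p / ‖x‖ ^ ((n : ℝ) + s * p)))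
    (R : ℝ) (hR : 0 < R) :
    ∃ C : ℝ, 0 < C ∧ ∀ (φ u : Euc n → ℝ), MemX n s p R φ →
      IsMinimizer n F W u (ball 0 R) → (∀ x ∉ ball (0 : Euc n) R, u x = φ x) →
      energy n F W u (ball 0 R) ≤ ENNReal.ofReal C *
        (WspNormP n s p φ (ball 0 (2 * R)) +
          (eLpNorm φ ⊤ (volume.restrict (ball (0 : Euc n) (2 * R))ᶜ)) ^ p +
          eLpNorm W ⊤ (volume : Measure ℝ)) :=
  minimizer_energy_bound_general n hn s p hs hp F W hW_nonneg h25 R hR
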